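/- arXiv:1903.08957 — 2 statements merged into one kernel-verified Lean document; each statement's English description precedes it below -/
import Mathlib

section
/- Fix y ∈ ℝⁿ, a vector θ ∈ ℝᵐ, an invertible m×m matrix σ_p, an n×m matrix σ_f, reals v_x ≠ 0 and v_xx with v_xx - v_x² < 0, and vectors v_y ∈ ℝⁿ, v_xy ∈ ℝⁿ being columns contracted appropriately. Consider the quadratic function F(π) = ((v_xx - v_x²)/2)·πᵀσ_pσ_pᵀπ + πᵀ(σ_p θ v_x + σ_p σ_fᵀ(v_xy - v_x v_y)) over π ∈ ℝᵐ, where σ_pσ_pᵀ is positive definite. Then F attains its unique global maximum at π̌ = -(σ_pᵀ)⁻¹ · ((θ - σ_fᵀ v_y) v_x + σ_fᵀ v_xy)/(v_xx - v_x²), and the maximum value equals -|(θ - σ_fᵀ v_y) v_x + σ_fᵀ v_xy|² / (2(v_xx - v_x²)). -/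
/-!
Substituting `u = σ_pᵀ π` turns `F` into `(c/2)|u|² + ⟪u, w⟫` with `c = v_xx - v_x² < 0`, since
`πᵀσ_pσ_pᵀπ = |σ_pᵀπ|²` and the linear coefficient is `σ_p w`. Completing the square gives
`(c/2)|u + c⁻¹w|² - |w|²/(2c)`, maximised exactly at `u = -c⁻¹w`; as `σ_pᵀ` is invertible this
`u` corresponds to the single point `π̌`.
-/

open Matrix

section CompleteSquare

variable {ι : Type*} [Fintype ι]

lemma dotProduct_self_pos_of_ne_zero {R : Type*} [Ring R] [LinearOrder R] [IsStrictOrderedRing R]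
    {v : ι → R} (hv : v ≠ 0) : 0 < v ⬝ᵥ v :=
  lt_of_le_of_ne (Finset.sum_nonneg fun i _ => mul_self_nonneg (v i))
    (Ne.symm (dotProduct_self_eq_zero.not.mpr hv))

lemma half_mul_dotProduct_self_add_dotProduct_eq {c : ℝ} (hc : c ≠ 0) (u w : ι → ℝ) :
    (c / 2) * (u ⬝ᵥ u) + u ⬝ᵥ w
      = (c / 2) * ((u + c⁻¹ • w) ⬝ᵥ (u + c⁻¹ • w)) - (w ⬝ᵥ w) / (2 * c) := by
  simp only [add_dotProduct, dotProduct_add, smul_dotProduct, dotProduct_smul, smul_eq_mul,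
    dotProduct_comm w u]
  field_simp
  ring

lemma half_mul_dotProduct_self_add_dotProduct_neg_inv_smul {c : ℝ} (hc : c ≠ 0) (w : ι → ℝ) :
    (c / 2) * ((-c⁻¹ • w) ⬝ᵥ (-c⁻¹ • w)) + (-c⁻¹ • w) ⬝ᵥ w = -(w ⬝ᵥ w) / (2 * c) := by
  rw [half_mul_dotProduct_self_add_dotProduct_eq hc, neg_smul, neg_add_cancel, zero_dotProduct,
    mul_zero, zero_sub, neg_div]

lemma half_mul_dotProduct_self_add_dotProduct_lt {c : ℝ} (hc : c < 0) (w : ι → ℝ) {u : ι → ℝ}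
    (hu : u ≠ -c⁻¹ • w) :
    (c / 2) * (u ⬝ᵥ u) + u ⬝ᵥ w < -(w ⬝ᵥ w) / (2 * c) := by
  have hd : u + c⁻¹ • w ≠ 0 := by
    rwa [Ne, add_eq_zero_iff_eq_neg, ← neg_smul]
  have hsq : (c / 2) * ((u + c⁻¹ • w) ⬝ᵥ (u + c⁻¹ • w)) < 0 :=
    mul_neg_of_neg_of_pos (by linarith) (dotProduct_self_pos_of_ne_zero hd)
  rw [half_mul_dotProduct_self_add_dotProduct_eq hc.ne, neg_div]
  linarith

end CompleteSquare

lemma dotProduct_mul_transpose_mulVec_self {ι κ R : Type*} [Fintype ι] [Fintype κ] [CommSemiring R]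
    (A : Matrix ι κ R) (v : ι → R) : v ⬝ᵥ (A * Aᵀ) *ᵥ v = Aᵀ *ᵥ v ⬝ᵥ Aᵀ *ᵥ v := by
  rw [← mulVec_mulVec, dotProduct_mulVec, ← mulVec_transpose]

theorem stmt_1_general {m n : ℕ}
    (θ : Fin m → ℝ) (σp : Matrix (Fin m) (Fin m) ℝ) (σf : Matrix (Fin n) (Fin m) ℝ)
    (vx vxx : ℝ) (vy vxy : Fin n → ℝ)
    (hconc : vxx - vx ^ 2 < 0) (hinv : IsUnit σp.det)
    (F : (Fin m → ℝ) → ℝ)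
    (hF : ∀ π : Fin m → ℝ,
      F π = ((vxx - vx ^ 2) / 2) * (π ⬝ᵥ (σp * σpᵀ).mulVec π)
        + π ⬝ᵥ (vx • σp.mulVec θ + (σp * σfᵀ).mulVec (vxy - vx • vy))) :
    let w : Fin m → ℝ := vx • (θ - σfᵀ.mulVec vy) + σfᵀ.mulVec vxy
    let πcheck : Fin m → ℝ := (-(vxx - vx ^ 2)⁻¹) • (σpᵀ)⁻¹.mulVec w
    (∀ π : Fin m → ℝ, π ≠ πcheck → F π < F πcheck) ∧
    F πcheck = -(w ⬝ᵥ w) / (2 * (vxx - vx ^ 2)) := by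
  intro w πcheck
  set c := vxx - vx ^ 2
  have hinvT : IsUnit σpᵀ.det := by rwa [det_transpose]
  have hlin : vx • σp *ᵥ θ + (σp * σfᵀ) *ᵥ (vxy - vx • vy) = σp *ᵥ w := by
    rw [← mulVec_mulVec, ← mulVec_smul, ← mulVec_add]
    congr 1
    simp only [w, mulVec_sub, mulVec_smul]
    module
  have hF' : ∀ π, F π = (c / 2) * (σpᵀ *ᵥ π ⬝ᵥ σpᵀ *ᵥ π) + σpᵀ *ᵥ π ⬝ᵥ w := fun π => by
    rw [hF, hlin, dotProduct_mul_transpose_mulVec_self, dotProduct_mulVec π,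
      ← mulVec_transpose]
  have hcheck : σpᵀ *ᵥ πcheck = -c⁻¹ • w := by
    rw [mulVec_smul, mulVec_mulVec, mul_nonsing_inv _ hinvT, one_mulVec]
  have hmax : F πcheck = -(w ⬝ᵥ w) / (2 * c) := by
    rw [hF', hcheck, half_mul_dotProduct_self_add_dotProduct_neg_inv_smul hconc.ne]
  refine ⟨fun π hπ => ?_, hmax⟩
  rw [hF', hmax]
  refine half_mul_dotProduct_self_add_dotProduct_lt hconc w ?_
  rw [← hcheck]
  exact (mulVec_injective_of_isUnit ((isUnit_iff_isUnit_det _).mpr hinvT)).ne hπ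

/-- the quadratic function
`F(π) = ((v_xx - v_x²)/2)·πᵀσ_pσ_pᵀπ + πᵀ(σ_pθ v_x + σ_pσ_fᵀ(v_xy - v_x v_y))`
with `v_xx - v_x² < 0` and `σ_p` invertible attains its unique global maximum at
`π̌ = -(σ_pᵀ)⁻¹((θ - σ_fᵀ v_y)v_x + σ_fᵀ v_xy)/(v_xx - v_x²)`, with maximum value
`-|(θ - σ_fᵀ v_y)v_x + σ_fᵀ v_xy|²/(2(v_xx - v_x²))`. -/
theorem stmt_1 {m n : ℕ}
    (θ : Fin m → ℝ) (σp : Matrix (Fin m) (Fin m) ℝ) (σf : Matrix (Fin n) (Fin m) ℝ)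
    (vx vxx : ℝ) (vy vxy : Fin n → ℝ)
    (hvx : vx ≠ 0) (hconc : vxx - vx ^ 2 < 0) (hinv : IsUnit σp.det)
    (hpd : (σp * σpᵀ).PosDef)
    (F : (Fin m → ℝ) → ℝ)
    (hF : ∀ π : Fin m → ℝ,
      F π = ((vxx - vx ^ 2) / 2) * (π ⬝ᵥ (σp * σpᵀ).mulVec π)
        + π ⬝ᵥ (vx • σp.mulVec θ + (σp * σfᵀ).mulVec (vxy - vx • vy))) :
    let w : Fin m → ℝ := vx • (θ - σfᵀ.mulVec vy) + σfᵀ.mulVec vxy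
    let πcheck : Fin m → ℝ := (-(vxx - vx ^ 2)⁻¹) • (σpᵀ)⁻¹.mulVec w
    (∀ π : Fin m → ℝ, π ≠ πcheck → F π < F πcheck) ∧
    F πcheck = -(w ⬝ᵥ w) / (2 * (vxx - vx ^ 2)) :=
  stmt_1_general θ σp σf vx vxx vy vxy hconc hinv F hF
end

section
/- Let η : [0,T] × ℝⁿ → ℝ with η < α solve ∂η/∂t + (1/2)tr(σ_fσ_f* D²η) + (g - σ_fθ)* Dη - (1/(η-α))(Dη)* σ_fσ_f* Dη - r(α-η) = 0 with η(T,·) = 0. Then η̃ := 1/(α-η) solves the linear PDE ∂η̃/∂t + (g - σ_fθ)* Dη̃ + (1/2)tr(σ_fσ_f* D²η̃) - r·η̃ = 0 with η̃(T,·) = 1/α. -/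
/-!
With `u = α - η`, the chain rule gives `∂ₜ(1/u) = ∂ₜη / u²`, `D(1/u) = Dη / u²` and
`D²(1/u) = D²η / u² + 2 Dη Dηᵀ / u³`. Hence the linear operator applied to `1/u` is `u⁻²` times
the Riccati operator applied to `η`: the extra Hessian term `tr(σσᵀ Dη Dηᵀ) / u³` is exactly the
quadratic gradient term of the Riccati equation.
-/

open Matrix

/-- Gradient in `y` of a function on `ℝⁿ`, as a vector of partial derivatives. -/
noncomputable def grad {n : ℕ} (f : (Fin n → ℝ) → ℝ) (y : Fin n → ℝ) : Fin n → ℝ :=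
  fun i => fderiv ℝ f y (Pi.single i 1)

/-- Hessian in `y` of a function on `ℝⁿ`, as a matrix of second partial derivatives. -/
noncomputable def hess {n : ℕ} (f : (Fin n → ℝ) → ℝ) (y : Fin n → ℝ) :
    Matrix (Fin n) (Fin n) ℝ :=
  Matrix.of fun i j => fderiv ℝ (fun y' => fderiv ℝ f y' (Pi.single j 1)) y (Pi.single i 1)

theorem HasFDerivAt.inv_const_sub {E : Type*} [NormedAddCommGroup E] [NormedSpace ℝ E]
    {f : E → ℝ} {f' : E →L[ℝ] ℝ} {x : E} {c : ℝ} (hf : HasFDerivAt f f' x) (hx : f x ≠ c) :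
    HasFDerivAt (fun w => (c - f w)⁻¹) (((c - f x) ^ 2)⁻¹ • f') x := by
  simpa [Function.comp_def] using
    (hasDerivAt_inv (sub_ne_zero.2 hx.symm)).comp_hasFDerivAt x (hf.const_sub c)

theorem HasDerivAt.inv_const_sub {u : ℝ → ℝ} {u' t c : ℝ} (hu : HasDerivAt u u' t)
    (ht : u t ≠ c) : HasDerivAt (fun s => (c - u s)⁻¹) (((c - u t) ^ 2)⁻¹ * u') t := by
  simpa [div_eq_inv_mul, Pi.inv_def] using (hu.const_sub c).inv (sub_ne_zero.2 ht.symm)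

theorem Matrix.trace_mul_vecMulVec {n R : Type*} [Fintype n] [CommSemiring R]
    (A : Matrix n n R) (v w : n → R) : trace (A * vecMulVec v w) = w ⬝ᵥ A *ᵥ v := by
  rw [mul_vecMulVec, trace_vecMulVec, dotProduct_comm]

section InvConstSub

variable {n : ℕ} {f : (Fin n → ℝ) → ℝ} {c : ℝ} {y : Fin n → ℝ}

theorem grad_inv_const_sub (hf : DifferentiableAt ℝ f y) (hy : f y ≠ c) :
    grad (fun z => (c - f z)⁻¹) y = ((c - f y) ^ 2)⁻¹ • grad f y := by
  ext i
  simp [grad, (hf.hasFDerivAt.inv_const_sub hy).fderiv]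

theorem hess_inv_const_sub (hf : ContDiff ℝ 2 f) (hc : ∀ z, f z ≠ c) :
    hess (fun z => (c - f z)⁻¹) y
      = ((c - f y) ^ 2)⁻¹ • hess f y
        + (2 * ((c - f y) ^ 3)⁻¹) • vecMulVec (grad f y) (grad f y) := by
  have hDf : ∀ z, HasFDerivAt f (fderiv ℝ f z) z := fun z =>
    (hf.differentiable two_ne_zero z).hasFDerivAt
  ext i j
  have hD2f : HasFDerivAt (fun z => fderiv ℝ f z (Pi.single j 1))
      (fderiv ℝ (fun z => fderiv ℝ f z (Pi.single j 1)) y) y :=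
    (((hf.fderiv_right le_rfl).clm_apply contDiff_const).differentiable one_ne_zero y).hasFDerivAt
  have hsq := ((hDf y).inv_const_sub (hc y)).pow 2
  have hfirst : (fun z => fderiv ℝ (fun w => (c - f w)⁻¹) z (Pi.single j 1))
      = fun z => ((c - f z)⁻¹) ^ 2 * fderiv ℝ f z (Pi.single j 1) := by
    funext z
    simp [((hDf z).inv_const_sub (hc z)).fderiv, inv_pow]
  simp only [hess, of_apply]
  rw [hfirst, (hsq.fun_mul hD2f).fderiv]
  have hcy : c - f y ≠ 0 := sub_ne_zero.2 (hc y).symm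
  simp only [grad, smul_eq_mul, nsmul_eq_mul, Nat.cast_ofNat, Nat.add_one_sub_one, pow_one,
    _root_.add_apply, _root_.smul_apply, Matrix.add_apply, Matrix.smul_apply, of_apply,
    vecMulVec_apply]
  field_simp

end InvConstSub

theorem riccati_reciprocal_identity {a b q r s e c : ℝ} (he : e ≠ c)
    (h : a + 1 / 2 * s + b - 1 / (e - c) * q - r * (c - e) = 0) :
    ((c - e) ^ 2)⁻¹ * a + ((c - e) ^ 2)⁻¹ * b
      + 1 / 2 * (((c - e) ^ 2)⁻¹ * s + 2 * ((c - e) ^ 3)⁻¹ * q) - r * (c - e)⁻¹ = 0 := by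
  have hce : c - e ≠ 0 := sub_ne_zero.2 he.symm
  have hec : e - c ≠ 0 := sub_ne_zero.2 he
  field_simp at h ⊢
  linear_combination -h

theorem stmt_5_general {n m : ℕ} (T α : ℝ)
    (σf : (Fin n → ℝ) → Matrix (Fin n) (Fin m) ℝ) (g : (Fin n → ℝ) → Fin n → ℝ)
    (θ : (Fin n → ℝ) → Fin m → ℝ) (r : (Fin n → ℝ) → ℝ)
    (η : ℝ → (Fin n → ℝ) → ℝ)
    (hη_lt : ∀ t y, η t y < α)
    (hη_smooth : ContDiff ℝ 2 (fun p : ℝ × (Fin n → ℝ) => η p.1 p.2))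
    (hPDE : ∀ (t : ℝ) (y : Fin n → ℝ),
      deriv (fun s => η s y) t
        + (1 / 2) * Matrix.trace (σf y * (σf y)ᵀ * hess (η t) y)
        + (g y - (σf y).mulVec (θ y)) ⬝ᵥ grad (η t) y
        - (1 / (η t y - α)) * (grad (η t) y ⬝ᵥ (σf y * (σf y)ᵀ).mulVec (grad (η t) y))
        - r y * (α - η t y) = 0)
    (hterm : ∀ y, η T y = 0) :
    (∀ (t : ℝ) (y : Fin n → ℝ),
      deriv (fun s => (α - η s y)⁻¹) t
        + (g y - (σf y).mulVec (θ y)) ⬝ᵥ grad (fun y' => (α - η t y')⁻¹) y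
        + (1 / 2) * Matrix.trace (σf y * (σf y)ᵀ * hess (fun y' => (α - η t y')⁻¹) y)
        - r y * (α - η t y)⁻¹ = 0) ∧
    ∀ y, (α - η T y)⁻¹ = α⁻¹ := by
  refine ⟨fun t y => ?_, fun y => by rw [hterm y, sub_zero]⟩
  have hηt : ContDiff ℝ 2 (η t) := hη_smooth.comp (contDiff_const.prodMk contDiff_id)
  have hηy : ContDiff ℝ 2 (fun s => η s y) := hη_smooth.comp (contDiff_id.prodMk contDiff_const)
  have hne : ∀ z, η t z ≠ α := fun z => (hη_lt t z).ne
  rw [((hηy.differentiable two_ne_zero t).hasDerivAt.inv_const_sub (hne y)).deriv,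
    grad_inv_const_sub (hηt.differentiable two_ne_zero y) (hne y), hess_inv_const_sub hηt hne,
    Matrix.mul_add, trace_add, Matrix.mul_smul, Matrix.mul_smul, trace_smul, trace_smul,
    trace_mul_vecMulVec, dotProduct_smul]
  simpa only [smul_eq_mul] using riccati_reciprocal_identity (hne y) (hPDE t y)

/-- if `η < α` solves
`∂η/∂t + ½tr(σ_fσ_f* D²η) + (g - σ_fθ)*Dη - (1/(η-α))(Dη)*σ_fσ_f*Dη - r(α-η) = 0`,
`η(T,·) = 0`, then `η̃ = 1/(α-η)` solves the linear PDE
`∂η̃/∂t + (g - σ_fθ)*Dη̃ + ½tr(σ_fσ_f* D²η̃) - r·η̃ = 0`, `η̃(T,·) = 1/α`. -/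
theorem stmt_5 {n m : ℕ} (T α : ℝ) (hT : 0 < T) (hα : 0 < α)
    (σf : (Fin n → ℝ) → Matrix (Fin n) (Fin m) ℝ) (g : (Fin n → ℝ) → Fin n → ℝ)
    (θ : (Fin n → ℝ) → Fin m → ℝ) (r : (Fin n → ℝ) → ℝ)
    (η : ℝ → (Fin n → ℝ) → ℝ)
    (hη_lt : ∀ t y, η t y < α)
    (hη_smooth : ContDiff ℝ 2 (fun p : ℝ × (Fin n → ℝ) => η p.1 p.2))
    (hPDE : ∀ (t : ℝ) (y : Fin n → ℝ),
      deriv (fun s => η s y) t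
        + (1 / 2) * Matrix.trace (σf y * (σf y)ᵀ * hess (η t) y)
        + (g y - (σf y).mulVec (θ y)) ⬝ᵥ grad (η t) y
        - (1 / (η t y - α)) * (grad (η t) y ⬝ᵥ (σf y * (σf y)ᵀ).mulVec (grad (η t) y))
        - r y * (α - η t y) = 0)
    (hterm : ∀ y, η T y = 0) :
    (∀ (t : ℝ) (y : Fin n → ℝ),
      deriv (fun s => (α - η s y)⁻¹) t
        + (g y - (σf y).mulVec (θ y)) ⬝ᵥ grad (fun y' => (α - η t y')⁻¹) y
        + (1 / 2) * Matrix.trace (σf y * (σf y)ᵀ * hess (fun y' => (α - η t y')⁻¹) y)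
        - r y * (α - η t y)⁻¹ = 0) ∧
    ∀ y, (α - η T y)⁻¹ = α⁻¹ :=
  stmt_5_general T α σf g θ r η hη_lt hη_smooth hPDE hterm
end
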